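/- arXiv:2111.06724 — 2 statements merged into one kernel-verified Lean document; each statement's English description precedes it below -/
import Mathlib

section
/- Let C ⊆ [0,1] be the fat Cantor set with level-n interval length l_n = 1/(2^{n+1} − 1). Then the product set F = C × C ⊆ ℝ² admits a (1/2, 1/4) separated structure; in fact, for each k the family 𝒮_k of all sets F ∩ (I × I'), where I and I' range over the maximal subintervals of C_k, has the property that each element has diameter at most √2 · 2^{−k} and, for k ≥ 2, distinct elements are at distance at least (1/4) · 4^{−k}. -/
noncomputable section

/-- `l_n = 1/(2^{n+1} − 1)`, the common length of the `2^n` maximal closed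
subintervals of the stage-`n` set `C_n` of the fat Cantor set construction. -/
def lCant (n : ℕ) : ℝ := 1 / (2 ^ (n + 1) - 1)

/-- Auxiliary recursion computing the left endpoint of the level-`n` interval
indexed by a binary word (`false` = left child, `true` = right child). -/
def leftEndAux : ℕ → ℝ → List Bool → ℝ
  | _, a, [] => a
  | n, a, b :: w => leftEndAux (n + 1) (if b then a + lCant n - lCant (n + 1) else a) w

/-- The left endpoint of the interval of the fat Cantor set construction indexed by
the binary word `w` (an interval of level `w.length`). -/
def leftEnd (w : List Bool) : ℝ := leftEndAux 0 0 w

/-- The stage-`n` set `C_n`: the union of the `2^n` closed intervals of length `l_n`. -/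
def cantorStage (n : ℕ) : Set ℝ :=
  ⋃ (w : List Bool) (_ : w.length = n), Set.Icc (leftEnd w) (leftEnd w + lCant n)

/-- The fat Cantor set `C = ⋂ₙ C_n`. -/
def fatC : Set ℝ := ⋂ n : ℕ, cantorStage n

/-- The product set `F = C × C ⊆ ℝ²` (with the Euclidean metric). -/
def fatSquare : Set (EuclideanSpace ℝ (Fin 2)) := {x | x 0 ∈ fatC ∧ x 1 ∈ fatC}

/-- The element `F ∩ (I × I')` of the family `𝒮_k`, where `I, I'` are the maximal
subintervals of `C_k` indexed by the binary words `w, u` of length `k`. -/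
def piece (k : ℕ) (w u : List Bool) : Set (EuclideanSpace ℝ (Fin 2)) :=
  {x | x 0 ∈ Set.Icc (leftEnd w) (leftEnd w + lCant k) ∧
       x 1 ∈ Set.Icc (leftEnd u) (leftEnd u + lCant k)} ∩ fatSquare

/-- A nonempty set `F ⊆ ℝ^p` admits a `(ν, ρ)` separated structure. -/
def SepStructure {p : ℕ} (ν ρ : ℝ) (F : Set (EuclideanSpace ℝ (Fin p))) : Prop :=
  ∃ K : ℝ, 0 < K ∧ ∀ k : ℕ, ∃ S : Finset (Set (EuclideanSpace ℝ (Fin p))),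
    (F ⊆ ⋃ A ∈ S, A) ∧
    (∀ A ∈ S, EMetric.diam A < ENNReal.ofReal (K * ν ^ k)) ∧
    (∀ A ∈ S, ∀ B ∈ S, A ≠ B →
      ENNReal.ofReal ((1 / K) * ρ ^ k) < ⨅ x ∈ A, EMetric.infEdist x B)

/-! The maximal intervals of `C_k` are nested, and two distinct ones first split at some level
`m < k`, where they lie in the two children of a level-`m` interval and are thus separated by
the removed middle gap `l_m - 2 l_{m+1} ≥ 4^{-(m+2)}`. A point of `F` lies in one interval of
`C_k` in each coordinate, so the sets `F ∩ (I × I')` cover `F`; they are `4^{-(k+1)}`-separated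
and have diameter at most `√2 l_k ≤ √2 · 2^{-k}`, whence the separated structure with `K = 8`. -/

open Set

lemma lCant_pos (n : ℕ) : 0 < lCant n := by
  have : (1 : ℝ) < 2 ^ (n + 1) := one_lt_pow₀ one_lt_two n.succ_ne_zero
  exact one_div_pos.mpr (by linarith)

lemma lCant_succ_le (n : ℕ) : lCant (n + 1) ≤ lCant n := by
  have : (1 : ℝ) < 2 ^ (n + 1) := one_lt_pow₀ one_lt_two n.succ_ne_zero
  unfold lCant
  gcongr
  · linarith
  · norm_num

lemma lCant_le_inv_two_pow (n : ℕ) : lCant n ≤ ((2 : ℝ) ^ n)⁻¹ := by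
  have : (1 : ℝ) ≤ 2 ^ n := one_le_pow₀ one_le_two
  rw [lCant, one_div, pow_succ]
  gcongr
  linarith

/-- The length of the open interval removed from the middle of a level-`n` interval. -/
def gap (n : ℕ) : ℝ := lCant n - 2 * lCant (n + 1)

lemma inv_four_pow_le_gap (n : ℕ) : ((4 : ℝ) ^ (n + 2))⁻¹ ≤ gap n := by
  set t : ℝ := 2 ^ (n + 1) with ht
  have ht2 : 2 ≤ t := le_self_pow₀ one_le_two n.succ_ne_zero
  have h4 : (4 : ℝ) ^ (n + 2) = 4 * t ^ 2 := by
    rw [ht, ← pow_mul, show (4 : ℝ) = 2 ^ 2 by norm_num, ← pow_mul]; ring_nf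
  have hgap : gap n = 1 / ((t - 1) * (2 * t - 1)) := by
    have hl : lCant (n + 1) = 1 / (2 * t - 1) := by rw [lCant, ht, pow_succ 2 (n + 1), mul_comm]
    rw [gap, hl, lCant, ← ht, mul_one_div, div_sub_div _ _ (by linarith) (by linarith)]
    ring
  rw [h4, hgap, ← one_div]
  exact one_div_le_one_div_of_le (by nlinarith) (by nlinarith)

/-- `cell n a v` is the interval reached from the level-`n` interval `[a, a + l_n]` by
following the word `v`. -/
def cell (n : ℕ) (a : ℝ) (v : List Bool) : Set ℝ :=
  Icc (leftEndAux n a v) (leftEndAux n a v + lCant (n + v.length))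

lemma cell_cons (n : ℕ) (a : ℝ) (b : Bool) (v : List Bool) :
    cell n a (b :: v) = cell (n + 1) (if b then a + lCant n - lCant (n + 1) else a) v := by
  rw [cell, cell, leftEndAux, List.length_cons, Nat.add_right_comm, Nat.add_assoc]

lemma cell_subset_Icc (n : ℕ) (a : ℝ) (v : List Bool) : cell n a v ⊆ Icc a (a + lCant n) := by
  induction v generalizing n a with
  | nil => simp [cell, leftEndAux]
  | cons b v ih =>
    rw [cell_cons]
    refine (ih _ _).trans (Icc_subset_Icc ?_ ?_) <;>
      cases b <;> simp only [Bool.false_eq_true, if_true, if_false] <;>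
      linarith [lCant_succ_le n, lCant_pos (n + 1)]

lemma gap_le_sub_of_mem_cell_false_of_mem_cell_true {n : ℕ} {a x y : ℝ} {v v' : List Bool}
    (hx : x ∈ cell n a (false :: v)) (hy : y ∈ cell n a (true :: v')) : gap n ≤ y - x := by
  rw [cell_cons] at hx hy
  have hx' := (cell_subset_Icc _ _ _ hx).2
  have hy' := (cell_subset_Icc _ _ _ hy).1
  simp only [Bool.false_eq_true, if_true, if_false] at hx' hy'
  rw [gap]
  linarith

lemma exists_gap_le_abs_sub_of_mem_cell {n : ℕ} {a x y : ℝ} {v v' : List Bool}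
    (hlen : v.length = v'.length) (hne : v ≠ v') (hx : x ∈ cell n a v) (hy : y ∈ cell n a v') :
    ∃ m < n + v.length, gap m ≤ |x - y| := by
  induction v generalizing n a v' with
  | nil => exact absurd (List.length_eq_zero_iff.mp hlen.symm).symm hne
  | cons b v ih =>
    obtain _ | ⟨b', v'⟩ := v'
    · simp at hlen
    have hlen' : v.length = v'.length := Nat.succ.inj hlen
    by_cases hb : b = b'
    · subst hb
      rw [cell_cons] at hx hy
      obtain ⟨m, hm, hgap⟩ := ih hlen' (fun h => hne (h ▸ rfl)) hx hy
      exact ⟨m, by simp only [List.length_cons]; omega, hgap⟩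
    · refine ⟨n, by simp, ?_⟩
      cases b <;> cases b'
      · exact absurd rfl hb
      · rw [abs_sub_comm]
        exact (gap_le_sub_of_mem_cell_false_of_mem_cell_true hx hy).trans (le_abs_self _)
      · exact (gap_le_sub_of_mem_cell_false_of_mem_cell_true hy hx).trans (le_abs_self _)
      · exact absurd rfl hb

lemma Icc_leftEnd_eq_cell {k : ℕ} {w : List Bool} (hw : w.length = k) :
    Icc (leftEnd w) (leftEnd w + lCant k) = cell 0 0 w := by
  rw [cell, Nat.zero_add, hw, leftEnd]

lemma inv_four_pow_le_dist_of_mem_piece {k : ℕ} {w u w' u' : List Bool}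
    (hw : w.length = k) (hu : u.length = k) (hw' : w'.length = k) (hu' : u'.length = k)
    (hne : piece k w u ≠ piece k w' u') {x y : EuclideanSpace ℝ (Fin 2)}
    (hx : x ∈ piece k w u) (hy : y ∈ piece k w' u') :
    ((4 : ℝ) ^ (k + 1))⁻¹ ≤ dist x y := by
  have coord_sep : ∀ (i : Fin 2) (v v' : List Bool), v.length = k → v'.length = k → v ≠ v' →
      x i ∈ Icc (leftEnd v) (leftEnd v + lCant k) → y i ∈ Icc (leftEnd v') (leftEnd v' + lCant k) →
      ((4 : ℝ) ^ (k + 1))⁻¹ ≤ dist x y := by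
    intro i v v' hv hv' hvv' hxi hyi
    rw [Icc_leftEnd_eq_cell hv] at hxi
    rw [Icc_leftEnd_eq_cell hv'] at hyi
    obtain ⟨m, hm, hgap⟩ := exists_gap_le_abs_sub_of_mem_cell (hv.trans hv'.symm) hvv' hxi hyi
    calc ((4 : ℝ) ^ (k + 1))⁻¹ ≤ ((4 : ℝ) ^ (m + 2))⁻¹ :=
          inv_anti₀ (by positivity) (pow_le_pow_right₀ (by norm_num) (by omega))
      _ ≤ gap m := inv_four_pow_le_gap m
      _ ≤ dist (x i) (y i) := hgap.trans_eq (Real.dist_eq _ _).symm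
      _ ≤ dist x y := PiLp.dist_apply_le x y i
  by_cases hww' : w = w'
  · refine coord_sep 1 u u' hu hu' (fun huu' => hne ?_) hx.1.2 hy.1.2
    rw [hww', huu']
  · exact coord_sep 0 w w' hw hw' hww' hx.1.1 hy.1.1

lemma dist_le_sqrt_card_mul {ι : Type*} [Fintype ι] {x y : EuclideanSpace ℝ ι} {c : ℝ}
    (hc : 0 ≤ c) (h : ∀ i, dist (x i) (y i) ≤ c) : dist x y ≤ √(Fintype.card ι) * c := by
  rw [EuclideanSpace.dist_eq, ← Real.sqrt_sq hc, ← Real.sqrt_mul (Nat.cast_nonneg _)]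
  gcongr
  calc ∑ i, dist (x i) (y i) ^ 2 ≤ ∑ _i : ι, c ^ 2 := by gcongr with i; exact h i
    _ = _ := by simp

lemma diam_piece_le (k : ℕ) (w u : List Bool) :
    Metric.ediam (piece k w u) ≤ ENNReal.ofReal (√2 * ((2 : ℝ) ^ k)⁻¹) := by
  refine Metric.ediam_le fun x hx y hy => ?_
  rw [edist_dist]
  gcongr
  refine (dist_le_sqrt_card_mul (lCant_pos k).le (Fin.forall_fin_two.2 ⟨?_, ?_⟩)).trans ?_
  · exact (Real.dist_le_of_mem_Icc hx.1.1 hy.1.1).trans (by simp)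
  · exact (Real.dist_le_of_mem_Icc hx.1.2 hy.1.2).trans (by simp)
  · rw [Fintype.card_fin, Nat.cast_ofNat]
    gcongr
    exact lCant_le_inv_two_pow k

/-- The family `𝒮_k`. -/
def pieces (k : ℕ) : Set (Set (EuclideanSpace ℝ (Fin 2))) :=
  image2 (piece k) {w | w.length = k} {u | u.length = k}

lemma pieces_finite (k : ℕ) : (pieces k).Finite :=
  (List.finite_length_eq Bool k).image2 _ (List.finite_length_eq Bool k)

lemma fatSquare_subset_sUnion_pieces (k : ℕ) : fatSquare ⊆ ⋃₀ pieces k := by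
  intro x hx
  obtain ⟨w, hw, hxw⟩ := mem_iUnion₂.mp (mem_iInter.mp hx.1 k)
  obtain ⟨u, hu, hxu⟩ := mem_iUnion₂.mp (mem_iInter.mp hx.2 k)
  exact ⟨piece k w u, mem_image2_of_mem hw hu, ⟨hxw, hxu⟩, hx⟩

/-- The product `F = C × C` of the fat Cantor set with itself
admits a `(1/2, 1/4)` separated structure; in fact, for each `k`, every set
`F ∩ (I × I')` (for maximal subintervals `I, I'` of `C_k`) has diameter at most
`√2 · 2^{−k}`, and for `k ≥ 2` distinct such sets are at distance at least
`(1/4) · 4^{−k}`. -/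
theorem stmt14 :
    SepStructure (1 / 2) (1 / 4) fatSquare ∧
    ∀ k : ℕ,
      (∀ w u : List Bool, w.length = k → u.length = k →
        EMetric.diam (piece k w u) ≤ ENNReal.ofReal (Real.sqrt 2 * ((2 : ℝ) ^ k)⁻¹)) ∧
      (2 ≤ k → ∀ w u w' u' : List Bool,
        w.length = k → u.length = k → w'.length = k → u'.length = k →
        piece k w u ≠ piece k w' u' →
        ∀ x ∈ piece k w u, ∀ y ∈ piece k w' u',
          (1 / 4) * ((4 : ℝ) ^ k)⁻¹ ≤ dist x y) := by
  have quarter_mul_inv_four_pow (k : ℕ) : (1 / 4) * ((4 : ℝ) ^ k)⁻¹ = ((4 : ℝ) ^ (k + 1))⁻¹ := by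
    rw [pow_succ, mul_inv, mul_comm, one_div]
  refine ⟨⟨8, by norm_num, fun k => ⟨(pieces_finite k).toFinset, ?_, ?_, ?_⟩⟩, fun k =>
    ⟨fun w u _ _ => diam_piece_le k w u, fun _ w u w' u' hw hu hw' hu' hne x hx y hy => ?_⟩⟩
  · simpa [sUnion_eq_biUnion] using fatSquare_subset_sUnion_pieces k
  · intro A hA
    obtain ⟨w, -, u, -, rfl⟩ := (pieces_finite k).mem_toFinset.mp hA
    refine (diam_piece_le k w u).trans_lt ((ENNReal.ofReal_lt_ofReal_iff (by positivity)).2 ?_)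
    have : √2 < 8 := by rw [Real.sqrt_lt' (by norm_num)]; norm_num
    rw [one_div, inv_pow]
    gcongr
  · intro A hA B hB hAB
    obtain ⟨w, hw, u, hu, rfl⟩ := (pieces_finite k).mem_toFinset.mp hA
    obtain ⟨w', hw', u', hu', rfl⟩ := (pieces_finite k).mem_toFinset.mp hB
    calc ENNReal.ofReal (1 / 8 * (1 / 4) ^ k) < ENNReal.ofReal ((4 ^ (k + 1))⁻¹) := by
          rw [ENNReal.ofReal_lt_ofReal_iff (by positivity), ← quarter_mul_inv_four_pow,
            one_div_pow, one_div (4 ^ k)]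
          gcongr
          norm_num
      _ ≤ _ := le_iInf₂ fun x hx => Metric.le_infEDist.2 fun y hy => by
          rw [edist_dist]
          exact ENNReal.ofReal_le_ofReal (inv_four_pow_le_dist_of_mem_piece hw hu hw' hu' hAB hx hy)
  · rw [quarter_mul_inv_four_pow]
    exact inv_four_pow_le_dist_of_mem_piece hw hu hw' hu' hne hx hy

end
end

section
/- For any bounded measurable set F ⊆ ℝ^p and any 0 < α ≤ 1, D_*(α, F) ≤ max(0, \overline{dim}_B(F) − 1), where \overline{dim}_B denotes the upper box dimension. -/
open MeasureTheory

noncomputable section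

/-- `C₁^α(F)`: the set of 1-Hölder-α functions `F → ℝ`, as a subset of the bounded
continuous functions on `F` (which carry the supremum metric). -/
def HolderBall (α : ℝ) {p : ℕ} (F : Set (EuclideanSpace ℝ (Fin p))) :
    Set (BoundedContinuousFunction ↥F ℝ) :=
  {f | ∀ x y : ↥F,
    |f x - f y| ≤ dist (x : EuclideanSpace ℝ (Fin p)) (y : EuclideanSpace ℝ (Fin p)) ^ α}

/-- `D_*^f(F) = sup {d : λ{r : dim_H (f⁻¹(r)) ≥ d} > 0}`. -/
def DstarF {p : ℕ} (F : Set (EuclideanSpace ℝ (Fin p))) (f : ↥F → ℝ) : ℝ :=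
  sSup {d : ℝ | 0 < volume {r : ℝ | ENNReal.ofReal d ≤ dimH (Subtype.val '' (f ⁻¹' {r}))}}

/-- `D_*(α, F)`: the supremum over all dense Gδ subsets `G` of `C₁^α(F)` of
`inf {D_*^f(F) : f ∈ G}`. -/
def DStar {p : ℕ} (α : ℝ) (F : Set (EuclideanSpace ℝ (Fin p))) : ℝ :=
  sSup {d : ℝ | ∃ G : Set ↥(HolderBall α F), Dense G ∧ IsGδ G ∧
    d = sInf ((fun g : ↥(HolderBall α F) =>
      DstarF F ⇑(g : BoundedContinuousFunction ↥F ℝ)) '' G)}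

/-- The smallest number of sets of diameter at most `δ` needed to cover `E`. -/
def Ncov {p : ℕ} (E : Set (EuclideanSpace ℝ (Fin p))) (δ : ℝ) : ℕ :=
  sInf {m : ℕ | ∃ U : Fin m → Set (EuclideanSpace ℝ (Fin p)),
    (∀ i, EMetric.diam (U i) ≤ ENNReal.ofReal δ) ∧ E ⊆ ⋃ i, U i}

/-- The upper box dimension `limsup_{δ → 0⁺} log N_δ(E) / log (1/δ)`. -/
def upperBoxDim {p : ℕ} (E : Set (EuclideanSpace ℝ (Fin p))) : ℝ :=
  Filter.limsup (fun δ : ℝ => Real.log (Ncov E δ) / Real.log (1 / δ))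
    (nhdsWithin 0 (Set.Ioi 0))


/-! Lipschitz functions are dense in `C₁^α(F)`: the inf-convolution of `f` with the concave
modulus `min (t ^ α) (L * t)` stays in `C₁^α(F)`, is `L`-Lipschitz and is uniformly close to `f`.
For a Lipschitz `f` and `s, q` with `dim_B F < s < q + 1`, cover `F` by `N_δ ≤ δ ^ (-s)` sets of
diameter `δ`; their images lie in intervals of length `O(δ)`, so by Markov's inequality the levels
`r` met by more than `δ ^ (-q)` of these intervals have measure `O(δ ^ (q + 1 - s))`, which is as
small as we like. With a margin built in, this property is open, so it defines dense open sets;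
intersecting over scales `2⁻ⁿ` and rational `q > max 0 (dim_B F - 1)` gives a dense Gδ set. By
Borel–Cantelli, each `f` in it has `μH[q] (f⁻¹ r) ≤ 1`, hence `dim_H (f⁻¹ r) ≤ q`, for almost
every `r`, and by Baire's theorem this set meets every dense Gδ set. -/

open Set Filter Topology
open scoped ENNReal NNReal BoundedContinuousFunction

section Covering

variable {p : ℕ}

lemma exists_fin_cover_of_finset_cover {F : Set (EuclideanSpace ℝ (Fin p))} {δ : ℝ} {ι : Type*}
    (s : Finset ι) (U : ι → Set (EuclideanSpace ℝ (Fin p)))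
    (hU : ∀ i, Metric.ediam (U i) ≤ ENNReal.ofReal δ) (hF : F ⊆ ⋃ i ∈ s, U i) :
    ∃ V : Fin s.card → Set (EuclideanSpace ℝ (Fin p)),
      (∀ j, Metric.ediam (V j) ≤ ENNReal.ofReal δ) ∧ F ⊆ ⋃ j, V j := by
  refine ⟨fun j => U (s.equivFin.symm j), fun j => hU _, fun x hx => ?_⟩
  obtain ⟨i, hi, hxi⟩ := mem_iUnion₂.1 (hF hx)
  exact mem_iUnion.2 ⟨s.equivFin ⟨i, hi⟩, by simpa using hxi⟩

lemma ediam_floor_cell_le {a : ℝ} (ha : 0 < a) (k : Fin p → ℤ) :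
    Metric.ediam {x : EuclideanSpace ℝ (Fin p) | ∀ i, ⌊x i / a⌋ = k i} ≤
      ENNReal.ofReal ((p + 1) * a) := by
  refine Metric.ediam_le fun x hx y hy => ?_
  rw [edist_dist]
  refine ENNReal.ofReal_le_ofReal ?_
  have hcoord : ∀ i, dist (x i) (y i) ≤ a := fun i => by
    have h := (Int.abs_sub_lt_one_of_floor_eq_floor ((hx i).trans (hy i).symm)).le
    rwa [← sub_div, abs_div, abs_of_pos ha, div_le_one ha, ← Real.dist_eq] at h
  calc dist x y = √(∑ i, dist (x i) (y i) ^ 2) := EuclideanSpace.dist_eq x y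
    _ ≤ √(∑ _i : Fin p, a ^ 2) := by gcongr with i; exact hcoord i
    _ = √(p * a ^ 2) := by simp
    _ ≤ √(((p + 1) * a) ^ 2) := by gcongr; nlinarith
    _ = (p + 1) * a := Real.sqrt_sq (by positivity)

lemma exists_fin_cover_of_subset_closedBall {F : Set (EuclideanSpace ℝ (Fin p))} {R δ : ℝ}
    (hR : 0 ≤ R) (hF : F ⊆ Metric.closedBall 0 R) (hδ : 0 < δ) :
    ∃ n : ℕ, (n : ℝ) ≤ (2 * (R * (p + 1) / δ) + 3) ^ p ∧
      ∃ V : Fin n → Set (EuclideanSpace ℝ (Fin p)),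
        (∀ j, Metric.ediam (V j) ≤ ENNReal.ofReal δ) ∧ F ⊆ ⋃ j, V j := by
  set a := δ / (p + 1)
  have ha : 0 < a := by positivity
  set m : ℕ := ⌈R / a⌉₊
  have hcover : F ⊆ ⋃ k ∈ Fintype.piFinset fun _ : Fin p => Finset.Icc (-m : ℤ) m,
      {x : EuclideanSpace ℝ (Fin p) | ∀ i, ⌊x i / a⌋ = k i} := by
    intro x hx
    refine mem_iUnion₂.2 ⟨fun i => ⌊x i / a⌋, Fintype.mem_piFinset.2 fun i => ?_, fun i => rfl⟩
    have hxR : |x i / a| ≤ m := by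
      rw [abs_div, abs_of_pos ha, div_le_iff₀ ha]
      calc |x i| ≤ R := (PiLp.norm_apply_le x i).trans (mem_closedBall_zero_iff.1 (hF hx))
        _ ≤ m * a := (div_le_iff₀ ha).1 (Nat.le_ceil _)
    obtain ⟨hlo, hhi⟩ := abs_le.1 hxR
    refine Finset.mem_Icc.2 ⟨Int.le_floor.2 (by simpa using hlo), ?_⟩
    simpa using Int.floor_le_floor hhi
  have hdiam : ∀ k : Fin p → ℤ,
      Metric.ediam {x : EuclideanSpace ℝ (Fin p) | ∀ i, ⌊x i / a⌋ = k i} ≤ ENNReal.ofReal δ :=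
    fun k => by
    simpa [a, mul_div_cancel₀ δ (show (p : ℝ) + 1 ≠ 0 by positivity)] using
      ediam_floor_cell_le (p := p) ha k
  have hcard : ((Fintype.piFinset fun _ : Fin p => Finset.Icc (-m : ℤ) m).card : ℝ) =
      (2 * m + 1) ^ p := by
    simp only [Fintype.card_piFinset, Int.card_Icc, Finset.prod_const, Finset.card_univ,
      Fintype.card_fin]
    rw [show (m : ℤ) + 1 - -m = ((2 * m + 1 : ℕ) : ℤ) by push_cast; ring, Int.toNat_natCast]
    push_cast; ring
  have hm : (m : ℝ) ≤ R * (p + 1) / δ + 1 := by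
    have hceil := Nat.ceil_lt_add_one (show 0 ≤ R / a by positivity)
    have hRa : R / a = R * (p + 1) / δ := by simp only [a]; field_simp
    linarith
  refine ⟨_, ?_, exists_fin_cover_of_finset_cover _ _ hdiam hcover⟩
  rw [hcard]
  gcongr ?_ ^ p
  linarith

lemma Ncov_le_of_subset_closedBall {F : Set (EuclideanSpace ℝ (Fin p))} {R δ : ℝ}
    (hR : 0 ≤ R) (hF : F ⊆ Metric.closedBall 0 R) (hδ : 0 < δ) :
    (Ncov F δ : ℝ) ≤ (2 * (R * (p + 1) / δ) + 3) ^ p := by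
  obtain ⟨n, hn, hcover⟩ := exists_fin_cover_of_subset_closedBall hR hF hδ
  exact (Nat.cast_le.2 (Nat.sInf_le hcover)).trans hn

lemma exists_fin_cover_Ncov {F : Set (EuclideanSpace ℝ (Fin p))} (hb : Bornology.IsBounded F)
    {δ : ℝ} (hδ : 0 < δ) :
    ∃ V : Fin (Ncov F δ) → Set (EuclideanSpace ℝ (Fin p)),
      (∀ j, Metric.ediam (V j) ≤ ENNReal.ofReal δ) ∧ F ⊆ ⋃ j, V j := by
  obtain ⟨R, hR, hFR⟩ := hb.subset_closedBall_lt 0 0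
  obtain ⟨n, -, hcover⟩ := exists_fin_cover_of_subset_closedBall hR.le hFR hδ
  exact Nat.sInf_mem (s := {m | ∃ V : Fin m → Set (EuclideanSpace ℝ (Fin p)),
    (∀ j, Metric.ediam (V j) ≤ ENNReal.ofReal δ) ∧ F ⊆ ⋃ j, V j}) ⟨n, hcover⟩

end Covering

section BoxDimension

variable {p : ℕ} {F : Set (EuclideanSpace ℝ (Fin p))}

lemma isBoundedUnder_log_Ncov_div_log (hb : Bornology.IsBounded F) :
    IsBoundedUnder (· ≤ ·) (𝓝[>] 0) fun δ : ℝ => Real.log (Ncov F δ) / Real.log (1 / δ) := by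
  obtain ⟨R, hR, hFR⟩ := hb.subset_closedBall_lt 0 0
  set C := 2 * (R * (p + 1)) + 3
  have hC : 1 < C := by
    have : 0 ≤ R * (p + 1) := by positivity
    linarith
  refine ⟨2 * p, eventually_map.2 ?_⟩
  filter_upwards [Ioo_mem_nhdsGT (show (0 : ℝ) < C⁻¹ by positivity)] with δ ⟨hδ0, hδC⟩
  have hδC' : C ≤ 1 / δ := by
    rw [one_div]; exact ((lt_inv_comm₀ hδ0 (by positivity)).1 hδC).le
  have hδ1 : δ < 1 := hδC.trans (inv_lt_one_of_one_lt₀ hC)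
  have hN : (Ncov F δ : ℝ) ≤ (1 / δ) ^ (2 * p) := calc
    (Ncov F δ : ℝ) ≤ (2 * (R * (p + 1) / δ) + 3) ^ p :=
      Ncov_le_of_subset_closedBall hR.le hFR hδ0
    _ ≤ (C / δ) ^ p := by gcongr; rw [le_div_iff₀ hδ0]; field_simp; nlinarith
    _ ≤ (1 / δ * (1 / δ)) ^ p := by rw [div_eq_mul_one_div C]; gcongr
    _ = (1 / δ) ^ (2 * p) := by ring
  have hlog : 0 < Real.log (1 / δ) := Real.log_pos (by rw [lt_div_iff₀ hδ0]; linarith)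
  rw [div_le_iff₀ hlog]
  rcases (Nat.cast_nonneg (α := ℝ) (Ncov F δ)).eq_or_lt with hN0 | hN0
  · rw [← hN0, Real.log_zero]; positivity
  · calc Real.log (Ncov F δ) ≤ Real.log ((1 / δ) ^ (2 * p)) := Real.log_le_log hN0 hN
      _ = 2 * p * Real.log (1 / δ) := by rw [Real.log_pow]; push_cast; ring

lemma eventually_Ncov_le_rpow (hb : Bornology.IsBounded F) {s : ℝ} (hs : upperBoxDim F < s) :
    ∀ᶠ δ in 𝓝[>] (0 : ℝ), (Ncov F δ : ℝ) ≤ (1 / δ) ^ s := by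
  filter_upwards [eventually_lt_of_limsup_lt hs (isBoundedUnder_log_Ncov_div_log hb),
    Ioo_mem_nhdsGT one_pos] with δ hδ ⟨hδ0, hδ1⟩
  have hlog : 0 < Real.log (1 / δ) := Real.log_pos (by rw [lt_div_iff₀ hδ0]; linarith)
  exact Real.le_rpow_of_log_le (by positivity) ((div_lt_iff₀ hlog).1 hδ).le

end BoxDimension

lemma ConcaveOn.map_add_le {f : ℝ → ℝ} (hf : ConcaveOn ℝ (Ici 0) f) (h0 : 0 ≤ f 0) {s t : ℝ}
    (hs : 0 ≤ s) (ht : 0 ≤ t) : f (s + t) ≤ f s + f t := by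
  rcases (add_nonneg hs ht).eq_or_lt with hst | hst
  · obtain rfl : s = 0 := by linarith
    obtain rfl : t = 0 := by linarith
    simpa using h0
  -- concavity on the segment `[0, s + t]`, and `f 0 ≥ 0`
  have key : ∀ u, 0 ≤ u → u ≤ s + t → u / (s + t) * f (s + t) ≤ f u := fun u hu hut => by
    have hθ : u / (s + t) ≤ 1 := div_le_one_of_le₀ hut hst.le
    have := hf.2 self_mem_Ici (mem_Ici.2 hst.le) (sub_nonneg.2 hθ) (by positivity)
      (sub_add_cancel 1 _)
    simp only [smul_eq_mul, mul_zero, zero_add, div_mul_cancel₀ u hst.ne'] at this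
    nlinarith [mul_nonneg (sub_nonneg.2 hθ) h0]
  have hs' := key s hs (by linarith)
  have ht' := key t ht (by linarith)
  calc f (s + t) = (s / (s + t) + t / (s + t)) * f (s + t) := by
        rw [← add_div, div_self hst.ne', one_mul]
    _ ≤ f s + f t := by linarith

lemma exists_rpow_le_mul_add {α ε : ℝ} (hα0 : 0 < α) (hα1 : α ≤ 1) (hε : 0 < ε) :
    ∃ L : ℝ, 0 < L ∧ ∀ t : ℝ, 0 ≤ t → t ^ α ≤ L * t + ε := by
  set t₀ := ε ^ α⁻¹
  have ht₀ : 0 < t₀ := by positivity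
  refine ⟨t₀ ^ (α - 1), by positivity, fun t ht => ?_⟩
  rcases le_total t t₀ with htt₀ | htt₀
  · calc t ^ α ≤ t₀ ^ α := by gcongr
      _ = ε := by rw [← Real.rpow_mul hε.le, inv_mul_cancel₀ hα0.ne', Real.rpow_one]
      _ ≤ t₀ ^ (α - 1) * t + ε := by
        have : 0 ≤ t₀ ^ (α - 1) * t := by positivity
        linarith
  · have htpos : 0 < t := ht₀.trans_le htt₀
    calc t ^ α = t ^ (α - 1) * t := by
          rw [← Real.rpow_add_one htpos.ne', sub_add_cancel]
      _ ≤ t₀ ^ (α - 1) * t :=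
          mul_le_mul_of_nonneg_right (Real.rpow_le_rpow_of_nonpos ht₀ htt₀ (by linarith)) ht
      _ ≤ t₀ ^ (α - 1) * t + ε := by linarith

section InfConvolution

variable {X : Type*} [PseudoMetricSpace X]

def infConvolution (f : X → ℝ) (ω : ℝ → ℝ) (x : X) : ℝ :=
  ⨅ y, f y + ω (dist x y)

variable {f : X → ℝ} {ω : ℝ → ℝ}

lemma bddBelow_range_add_dist (hf : BddBelow (range f)) (hω : ∀ t, 0 ≤ t → 0 ≤ ω t) (x : X) :
    BddBelow (range fun y => f y + ω (dist x y)) := by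
  obtain ⟨b, hb⟩ := hf
  refine ⟨b, forall_mem_range.2 fun y => ?_⟩
  linarith [hb (mem_range_self y), hω _ (dist_nonneg (x := x) (y := y))]

lemma infConvolution_le (hf : BddBelow (range f)) (hω : ∀ t, 0 ≤ t → 0 ≤ ω t)
    (hω0 : ω 0 = 0) (x : X) : infConvolution f ω x ≤ f x := by
  simpa [infConvolution, hω0] using ciInf_le (bddBelow_range_add_dist hf hω x) x

lemma sub_le_infConvolution {c : ℝ} {x : X} (h : ∀ y, f x ≤ f y + ω (dist x y) + c) :
    f x - c ≤ infConvolution f ω x := by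
  have : Nonempty X := ⟨x⟩
  exact le_ciInf fun y => by linarith [h y]

lemma abs_infConvolution_sub_le (hf : BddBelow (range f)) (hω : ∀ t, 0 ≤ t → 0 ≤ ω t)
    (hmono : MonotoneOn ω (Ici 0))
    (hsub : ∀ s t, 0 ≤ s → 0 ≤ t → ω (s + t) ≤ ω s + ω t) (x x' : X) :
    |infConvolution f ω x - infConvolution f ω x'| ≤ ω (dist x x') := by
  have key : ∀ x x' : X, infConvolution f ω x ≤ infConvolution f ω x' + ω (dist x x') := by
    intro x x'
    have : Nonempty X := ⟨x⟩
    rw [← sub_le_iff_le_add, infConvolution]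
    refine le_ciInf fun y => ?_
    have hxy : ω (dist x y) ≤ ω (dist x x') + ω (dist x' y) :=
      (hmono dist_nonneg (add_nonneg dist_nonneg dist_nonneg) (dist_triangle x x' y)).trans
        (hsub _ _ dist_nonneg dist_nonneg)
    linarith [ciInf_le (bddBelow_range_add_dist hf hω x) y,
      show infConvolution f ω x = _ from rfl]
  rw [abs_sub_le_iff]
  exact ⟨by linarith [key x x'], by linarith [dist_comm x x' ▸ key x' x]⟩

lemma exists_lipschitzWith_near_of_holder {α : ℝ} (hα0 : 0 < α) (hα1 : α ≤ 1)
    (hfb : BddBelow (range f)) (hf : ∀ x y, |f x - f y| ≤ dist x y ^ α) {ε : ℝ} (hε : 0 < ε) :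
    ∃ g : X → ℝ, ∃ K : ℝ≥0, LipschitzWith K g ∧ (∀ x y, |g x - g y| ≤ dist x y ^ α) ∧
      ∀ x, |g x - f x| ≤ ε := by
  obtain ⟨L, hL, hpow⟩ := exists_rpow_le_mul_add hα0 hα1 hε
  set ω : ℝ → ℝ := fun t => min (t ^ α) (L * t)
  have hω : ∀ t, 0 ≤ t → 0 ≤ ω t := fun t ht => le_min (by positivity) (by positivity)
  have hω0 : ω 0 = 0 := by simp [ω, Real.zero_rpow hα0.ne']
  have hmono : MonotoneOn ω (Ici 0) := fun s hs t _ hst =>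
    min_le_min (Real.rpow_le_rpow hs hst hα0.le) (by gcongr)
  have hconc : ConcaveOn ℝ (Ici 0) ω :=
    (Real.concaveOn_rpow hα0.le hα1).inf ((concaveOn_id (convex_Ici 0)).smul hL.le)
  have hmod := abs_infConvolution_sub_le hfb hω hmono
    (fun s t hs ht => hconc.map_add_le hω0.ge hs ht)
  refine ⟨infConvolution f ω, ⟨L, hL.le⟩, LipschitzWith.of_dist_le_mul fun x y => ?_,
    fun x y => (hmod x y).trans (min_le_left _ _), fun x => abs_le.2 ⟨?_, ?_⟩⟩
  · exact (hmod x y).trans (min_le_right _ _)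
  · have := sub_le_infConvolution (c := ε) (f := f) (ω := ω) (x := x) fun y => by
      have hωε : dist x y ^ α ≤ ω (dist x y) + ε := by
        rw [← min_add_add_right]
        exact le_min (by linarith) (hpow _ dist_nonneg)
      linarith [(abs_le.1 (hf x y)).2]
    linarith
  · linarith [infConvolution_le hfb hω hω0 x]

end InfConvolution

section LevelCovers

variable {p : ℕ}

def coverMultiplicity {N : ℕ} (I : Fin N → Set ℝ) (r : ℝ) : ℝ≥0∞ :=
  ∑ i, (I i).indicator 1 r

lemma coverMultiplicity_eq_card {N : ℕ} (I : Fin N → Set ℝ) (r : ℝ)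
    [DecidablePred (r ∈ I ·)] :
    coverMultiplicity I r = Fintype.card {i // r ∈ I i} := by
  simp [coverMultiplicity, Set.indicator_apply, Fintype.card_subtype, Finset.sum_boole]

lemma volume_setOf_one_lt_mul_coverMultiplicity_le {N : ℕ} {I : Fin N → Set ℝ}
    (hI : ∀ i, MeasurableSet (I i)) (k : ℝ≥0∞) :
    volume {r | 1 < k * coverMultiplicity I r} ≤ k * ∑ i, volume (I i) := by
  have hmeas : Measurable (coverMultiplicity I) :=
    Finset.measurable_sum _ fun i _ => measurable_const.indicator (hI i)
  calc volume {r | 1 < k * coverMultiplicity I r}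
      ≤ volume {r | 1 ≤ k * coverMultiplicity I r} :=
        measure_mono (ofPred_subset_ofPred.2 fun _ => le_of_lt)
    _ ≤ ∫⁻ r, k * coverMultiplicity I r := by
      simpa using mul_meas_ge_le_lintegral₀ (hmeas.const_mul k).aemeasurable 1
    _ = k * ∑ i, volume (I i) := by
      rw [lintegral_const_mul k hmeas]
      simp only [coverMultiplicity]
      rw [lintegral_finsetSum _ fun i _ => measurable_one.indicator (hI i)]
      simp_rw [lintegral_indicator_one (hI _)]

/-- `f ∈ levelCoverSet F q ε` records a cover of `F` by `N` sets `U i` of diameter at most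
`δ < ε` and sets of levels `I i ⊇ f(U i)` (with margin `η`), such that all levels `r` outside a
set of measure `< ε` lie in at most `δ ^ (-q)` of the `I i`. The level set `f⁻¹(r)` is then
covered by those `U i` with `r ∈ I i`. -/
def levelCoverSet (F : Set (EuclideanSpace ℝ (Fin p))) (q ε : ℝ) : Set (↥F →ᵇ ℝ) :=
  {f | ∃ δ ∈ Ioo 0 ε, ∃ η > 0, ∃ N : ℕ, ∃ U : Fin N → Set (EuclideanSpace ℝ (Fin p)),
    ∃ I : Fin N → Set ℝ, (∀ i, Metric.ediam (U i) ≤ ENNReal.ofReal δ) ∧ F ⊆ ⋃ i, U i ∧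
      (∀ i, MeasurableSet (I i)) ∧
      (∀ i (x : F), (x : EuclideanSpace ℝ (Fin p)) ∈ U i → Metric.closedBall (f x) η ⊆ I i) ∧
      volume {r | 1 < ENNReal.ofReal (δ ^ q) * coverMultiplicity I r} < ENNReal.ofReal ε}

variable {F : Set (EuclideanSpace ℝ (Fin p))}

lemma isOpen_levelCoverSet (q ε : ℝ) : IsOpen (levelCoverSet F q ε) := by
  refine Metric.isOpen_iff.2 ?_
  rintro f ⟨δ, hδ, η, hη, N, U, I, hU, hcov, hI, hball, hvol⟩
  refine ⟨η / 2, by positivity, fun g hg => ?_⟩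
  refine ⟨δ, hδ, η / 2, by positivity, N, U, I, hU, hcov, hI, fun i x hx => ?_, hvol⟩
  refine (Metric.closedBall_subset_closedBall' ?_).trans (hball i x hx)
  linarith [(BoundedContinuousFunction.dist_coe_le_dist x).trans (Metric.mem_ball.1 hg).le]

lemma mem_levelCoverSet_of_lipschitzWith (hb : Bornology.IsBounded F) {q ε : ℝ}
    (hq : upperBoxDim F < q + 1) (hε : 0 < ε) {f : ↥F →ᵇ ℝ} {K : ℝ≥0}
    (hf : LipschitzWith K f) :
    f ∈ levelCoverSet F q ε := by
  classical
  obtain ⟨s, hs, hsq⟩ := exists_between hq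
  have hdecay : ∀ᶠ δ in 𝓝[>] (0 : ℝ), 2 * (K + 1) * δ ^ (q + 1 - s) < ε := by
    have : Tendsto (fun δ : ℝ => 2 * (K + 1) * δ ^ (q + 1 - s)) (𝓝[>] 0) (𝓝 0) := by
      simpa [Real.zero_rpow (show q + 1 - s ≠ 0 by linarith)] using
        (((Real.continuous_rpow_const (by linarith : 0 ≤ q + 1 - s)).tendsto 0).const_mul
          (2 * (K + 1) : ℝ)).mono_left nhdsWithin_le_nhds
    exact this.eventually (gt_mem_nhds hε)
  obtain ⟨δ, hN, hsmall, hδ0, hδε⟩ :=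
    ((eventually_Ncov_le_rpow hb hs).and (hdecay.and (Ioo_mem_nhdsGT hε))).exists
  obtain ⟨U, hU, hcov⟩ := exists_fin_cover_Ncov hb hδ0
  set c : Fin (Ncov F δ) → ℝ := fun i =>
    if h : ∃ x : F, (x : EuclideanSpace ℝ (Fin p)) ∈ U i then f h.choose else 0
  have hc : ∀ i (x : F), (x : EuclideanSpace ℝ (Fin p)) ∈ U i → dist (f x) (c i) ≤ K * δ := by
    intro i x hx
    have h : ∃ x : F, (x : EuclideanSpace ℝ (Fin p)) ∈ U i := ⟨x, hx⟩
    simp only [c, dif_pos h]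
    refine hf.dist_le_mul_of_le ?_
    rw [Subtype.dist_eq, ← edist_le_ofReal hδ0.le]
    exact (Metric.edist_le_ediam_of_mem hx h.choose_spec).trans (hU i)
  refine ⟨δ, ⟨hδ0, hδε⟩, δ, hδ0, _, U, fun i => Metric.closedBall (c i) ((K + 1) * δ), hU, hcov,
    fun i => measurableSet_closedBall, fun i x hx => Metric.closedBall_subset_closedBall' ?_, ?_⟩
  · linarith [hc i x hx]
  refine (volume_setOf_one_lt_mul_coverMultiplicity_le (fun i => measurableSet_closedBall)
    _).trans_lt ?_
  have hreal : δ ^ q * Ncov F δ * (2 * ((K + 1) * δ)) ≤ 2 * (K + 1) * δ ^ (q + 1 - s) := calc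
    _ ≤ δ ^ q * (1 / δ) ^ s * (2 * ((K + 1) * δ)) := by gcongr
    _ = 2 * (K + 1) * δ ^ (q + 1 - s) := by
      rw [Real.div_rpow zero_le_one hδ0.le, Real.one_rpow, Real.rpow_sub hδ0,
        Real.rpow_add hδ0, Real.rpow_one]
      ring
  calc ENNReal.ofReal (δ ^ q) * ∑ i, volume (Metric.closedBall (c i) ((K + 1) * δ))
      = ENNReal.ofReal (δ ^ q * Ncov F δ * (2 * ((K + 1) * δ))) := by
        simp only [Real.volume_closedBall, Finset.sum_const, Finset.card_univ, Fintype.card_fin,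
          nsmul_eq_mul]
        symm
        rw [ENNReal.ofReal_mul (by positivity), ENNReal.ofReal_mul (by positivity),
          ENNReal.ofReal_natCast, mul_assoc]
    _ ≤ ENNReal.ofReal (2 * (K + 1) * δ ^ (q + 1 - s)) := ENNReal.ofReal_le_ofReal hreal
    _ < ENNReal.ofReal ε := (ENNReal.ofReal_lt_ofReal_iff hε).2 hsmall

end LevelCovers

lemma hausdorffMeasure_le_of_frequently_card_mul_le {X : Type*} [EMetricSpace X]
    [MeasurableSpace X] [BorelSpace X] {ι : ℕ → Type*} [∀ n, Fintype (ι n)] {q : ℝ} (hq : 0 ≤ q)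
    {s : Set X} {r : ℕ → ℝ≥0∞} (hr : Tendsto r atTop (𝓝 0)) (t : ∀ n, ι n → Set X)
    (ht : ∀ n i, Metric.ediam (t n i) ≤ r n) (hst : ∀ n, s ⊆ ⋃ i, t n i) {C : ℝ≥0∞}
    (hC : ∃ᶠ n in atTop, Fintype.card (ι n) * r n ^ q ≤ C) :
    μH[q] s ≤ C := by
  refine (Measure.hausdorffMeasure_le_liminf_sum q s r hr t (.of_forall (ht ·))
    (.of_forall hst)).trans (liminf_le_of_frequently_le' (hC.mono fun n hn => le_trans ?_ hn))
  calc ∑ i, Metric.ediam (t n i) ^ q ≤ ∑ _i : ι n, r n ^ q :=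
        Finset.sum_le_sum fun i _ => ENNReal.rpow_le_rpow (ht n i) hq
    _ = Fintype.card (ι n) * r n ^ q := by simp

section LevelSets

variable {p : ℕ} {F : Set (EuclideanSpace ℝ (Fin p))}

lemma ae_dimH_fiber_le_of_forall_mem_levelCoverSet {q : ℝ} (hq : 0 ≤ q) {f : ↥F →ᵇ ℝ}
    (hf : ∀ n : ℕ, f ∈ levelCoverSet F q ((2 : ℝ)⁻¹ ^ n)) :
    ∀ᵐ r, dimH (Subtype.val '' (f ⁻¹' {r})) ≤ ENNReal.ofReal q := by
  classical
  choose δ hδ η hη N U I hU hcov hI hball hvol using hf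
  have hsum :
      ∑' n, volume {r | 1 < ENNReal.ofReal (δ n ^ q) * coverMultiplicity (I n) r} ≠ ∞ := by
    refine ne_top_of_le_ne_top ?_ (ENNReal.tsum_le_tsum fun n => (hvol n).le)
    rw [← ENNReal.ofReal_tsum_of_nonneg (fun n => by positivity)
      (summable_geometric_of_lt_one (by norm_num) (by norm_num))]
    exact ENNReal.ofReal_ne_top
  filter_upwards [ae_eventually_notMem hsum] with r hr
  have hμ : μH[q] (Subtype.val '' (f ⁻¹' {r})) ≤ 1 := by
    refine hausdorffMeasure_le_of_frequently_card_mul_le hq (ι := fun n => {i // r ∈ I n i})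
      (r := fun n => ENNReal.ofReal (δ n)) ?_ (fun n i => U n i) (fun n i => hU n i) ?_ ?_
    · exact ENNReal.ofReal_zero ▸ ENNReal.tendsto_ofReal (squeeze_zero (fun n => (hδ n).1.le)
        (fun n => (hδ n).2.le)
        (tendsto_pow_atTop_nhds_zero_of_lt_one (by norm_num) (by norm_num)))
    · rintro n _ ⟨x, hx, rfl⟩
      obtain ⟨i, hi⟩ := mem_iUnion.1 (hcov n x.2)
      have hr : r ∈ Metric.closedBall (f x) (η n) :=
        mem_singleton_iff.1 hx ▸ Metric.mem_closedBall_self (hη n).le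
      exact mem_iUnion.2 ⟨⟨i, hball n i x hi hr⟩, hi⟩
    · refine hr.frequently.mono fun n hn => ?_
      rw [not_lt, coverMultiplicity_eq_card] at hn
      rwa [ENNReal.ofReal_rpow_of_pos (hδ n).1, mul_comm]
  have : μH[(q.toNNReal : ℝ)] (Subtype.val '' (f ⁻¹' {r})) ≠ ∞ := by
    rw [Real.coe_toNNReal q hq]
    exact ne_top_of_le_ne_top ENNReal.one_ne_top hμ
  exact dimH_le_of_hausdorffMeasure_ne_top this

end LevelSets

lemma DstarF_le_of_ae_dimH_le {p : ℕ} {F : Set (EuclideanSpace ℝ (Fin p))} {f : ↥F → ℝ}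
    {q : ℝ} (hq : 0 ≤ q) (h : ∀ᵐ r, dimH (Subtype.val '' (f ⁻¹' {r})) ≤ ENNReal.ofReal q) :
    DstarF F f ≤ q := by
  refine Real.sSup_le (fun d hd => ?_) hq
  by_contra! hqd
  refine hd.ne' (measure_mono_null (fun r hr => ?_) (ae_iff.1 h))
  exact not_le.2 (((ENNReal.ofReal_lt_ofReal_iff (hq.trans_lt hqd)).2 hqd).trans_le hr)

section HolderBall

variable {p : ℕ} {F : Set (EuclideanSpace ℝ (Fin p))} {α : ℝ}

lemma isClosed_holderBall : IsClosed (HolderBall α F) := by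
  simp only [HolderBall, ofPred_forall]
  exact isClosed_iInter fun x => isClosed_iInter fun y =>
    isClosed_le ((continuous_eval_const x).sub (continuous_eval_const y)).abs continuous_const

lemma zero_mem_holderBall : (0 : ↥F →ᵇ ℝ) ∈ HolderBall α F := fun x y => by
  simpa using Real.rpow_nonneg dist_nonneg α

lemma exists_lipschitzWith_near_of_mem_holderBall (hα0 : 0 < α) (hα1 : α ≤ 1) {f : ↥F →ᵇ ℝ}
    (hf : f ∈ HolderBall α F) {ε : ℝ} (hε : 0 < ε) :
    ∃ g ∈ HolderBall α F, dist g f ≤ ε ∧ ∃ K, LipschitzWith K g := by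
  obtain ⟨g, K, hgK, hgα, hgf⟩ :=
    exists_lipschitzWith_near_of_holder hα0 hα1 f.isBounded_range.bddBelow hf hε
  refine ⟨.ofNormedAddCommGroup g hgK.continuous (‖f‖ + ε) fun x => ?_, hgα,
    (BoundedContinuousFunction.dist_le hε.le).2 fun x => (Real.dist_eq _ _).trans_le (hgf x),
    K, hgK⟩
  calc ‖g x‖ ≤ ‖f x‖ + ‖g x - f x‖ := norm_le_norm_add_norm_sub' _ _
    _ ≤ ‖f‖ + ε := add_le_add (f.norm_coe_le_norm x) (hgf x)

lemma dense_preimage_levelCoverSet (hb : Bornology.IsBounded F) (hα0 : 0 < α) (hα1 : α ≤ 1)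
    {q ε : ℝ} (hq : upperBoxDim F < q + 1) (hε : 0 < ε) :
    Dense (((↑) : HolderBall α F → ↥F →ᵇ ℝ) ⁻¹' levelCoverSet F q ε) := by
  refine Metric.dense_iff.2 fun f r hr => ?_
  obtain ⟨g, hg, hgf, K, hgK⟩ :=
    exists_lipschitzWith_near_of_mem_holderBall hα0 hα1 f.2 (half_pos hr)
  exact ⟨⟨g, hg⟩, Metric.mem_ball.2 (hgf.trans_lt (half_lt_self hr)),
    mem_levelCoverSet_of_lipschitzWith hb hq hε hgK⟩

end HolderBall

theorem stmt17_general {p : ℕ} (F : Set (EuclideanSpace ℝ (Fin p)))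
    (hb : Bornology.IsBounded F)
    (α : ℝ) (hα0 : 0 < α) (hα1 : α ≤ 1) :
    DStar α F ≤ max 0 (upperBoxDim F - 1) := by
  set M := max 0 (upperBoxDim F - 1)
  have hM0 : 0 ≤ M := le_max_left _ _
  have : CompleteSpace (HolderBall α F) := isClosed_holderBall.completeSpace_coe
  have : Nonempty (HolderBall α F) := ⟨⟨0, zero_mem_holderBall⟩⟩
  set good : {q : ℚ // M < q} × ℕ → Set (HolderBall α F) :=
    fun qn => (↑) ⁻¹' levelCoverSet F qn.1 ((2 : ℝ)⁻¹ ^ qn.2)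
  have hopen : ∀ qn, IsOpen (good qn) := fun qn =>
    (isOpen_levelCoverSet _ _).preimage continuous_subtype_val
  have hdense : ∀ qn, Dense (good qn) := fun qn =>
    dense_preimage_levelCoverSet hb hα0 hα1 (by linarith [le_max_right 0 (upperBoxDim F - 1),
      qn.1.2]) (by positivity)
  refine Real.sSup_le ?_ hM0
  rintro _ ⟨G, hGdense, hGδ, rfl⟩
  obtain ⟨f, hfG, hfgood⟩ := (hGdense.inter_of_Gδ hGδ (.iInter_of_isOpen hopen)
    (dense_iInter_of_isOpen hopen hdense)).nonempty
  have hfM : DstarF F f.1 ≤ M := le_of_forall_lt_rat_imp_le fun q hq =>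
    DstarF_le_of_ae_dimH_le (hM0.trans hq.le) (ae_dimH_fiber_le_of_forall_mem_levelCoverSet
      (hM0.trans hq.le) fun n => mem_iInter.1 hfgood (⟨q, hq⟩, n))
  by_cases hbdd : BddBelow ((fun g : HolderBall α F => DstarF F g.1) '' G)
  · exact (csInf_le hbdd ⟨f, hfG, rfl⟩).trans hfM
  · rw [Real.sInf_of_not_bddBelow hbdd]
    exact hM0

/-- For any bounded measurable `F ⊆ ℝ^p` and any `0 < α ≤ 1`,
`D_*(α, F) ≤ max (0, \overline{dim}_B F − 1)`. -/
theorem stmt17 {p : ℕ} (F : Set (EuclideanSpace ℝ (Fin p)))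
    (hb : Bornology.IsBounded F) (hmes : MeasurableSet F)
    (α : ℝ) (hα0 : 0 < α) (hα1 : α ≤ 1) :
    DStar α F ≤ max 0 (upperBoxDim F - 1) :=
  stmt17_general F hb α hα0 hα1

end
end
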